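/- (Clifford relation, after Baez–Huerta.) Let M be a Hermitian 2×2 matrix over A, i.e. M = [[α·1, a],[σ(a), β·1]] with α, β ∈ ℂ and a ∈ A, and set det(M) := αβ − N(a) ∈ ℂ. Then for every Q ∈ A²: M̃·(M·Q) = −det(M)·Q and M·(M̃·Q) = −det(M)·Q. In other words, the action maps ρ(M)Q := M·Q (on Σ = A²) and ρ(M)Q := M̃·Q (on Σ* = A²) satisfy ρ(M)ρ(M) = −det(M)·id, making Σ ⊕ Σ* a ℤ/2ℤ-graded module over the Clifford algebra of the space V of Hermitian 2×2 matrices over A with quadratic form M ↦ −det(M). -/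

import Mathlib

/-!
Write `t = 2 Re(a)`, so that `σ(a) = t·1 − a`. Left alternativity `a(ax) = (aa)x` together with
bilinearity gives `a(bx) = (ab)x` and `ab = ba` whenever `a + b ∈ ℂ·1`. Applied to the pairs
`(a, σ(a))` and `(σ(a), a)`, this shows that left multiplications by `a` and by `σ(a)` compose to
`N(a)·id` in either order. Since `M̃ = [[−β·1, a],[σ(a), −α·1]]` is the adjugate of `M`, the
products `M̃·M` and `M·M̃` then act on `A²` as `(N(a) − αβ)·id`.
-/

namespace Stmt4

variable {A : Type*} [AddCommGroup A] [Module ℂ A]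

/-- Matrix–vector multiplication of a 2×2 matrix over `A` with a column vector in `A²`. -/
def act (mul : A → A → A) (M : Fin 2 → Fin 2 → A) (Q : Fin 2 → A) : Fin 2 → A :=
  fun k => mul (M k 0) (Q 0) + mul (M k 1) (Q 1)

def tilde (M : Fin 2 → Fin 2 → A) : Fin 2 → Fin 2 → A :=
  fun k l => M k l - if k = l then M 0 0 + M 1 1 else 0

theorem tilde_eq_adjugate (one a b : A) (α β : ℂ) :
    tilde ![![α • one, a], ![b, β • one]] = ![![(-β) • one, a], ![b, (-α) • one]] := by
  ext k l
  fin_cases k <;> fin_cases l <;> simp [tilde]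

section UnitalBilinear

variable (μ : A →ₗ[ℂ] A →ₗ[ℂ] A) {one : A}
  (hone_mul : ∀ x, μ one x = x) (hmul_one : ∀ x, μ x one = x)
include hone_mul hmul_one

theorem mul_comm_of_add_eq_smul_one {a b : A} {t : ℂ} (hab : a + b = t • one) :
    μ a b = μ b a := by
  rw [eq_sub_of_add_eq' hab]
  simp only [map_sub, map_smul, LinearMap.sub_apply, LinearMap.smul_apply, hone_mul, hmul_one]

theorem mul_mul_of_add_eq_smul_one (halt_left : ∀ x y, μ (μ x x) y = μ x (μ x y))
    {a b : A} {t : ℂ} (hab : a + b = t • one) (x : A) :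
    μ a (μ b x) = μ (μ a b) x := by
  rw [eq_sub_of_add_eq' hab]
  simp only [map_sub, map_smul, LinearMap.sub_apply, LinearMap.smul_apply, hone_mul, hmul_one,
    halt_left]

theorem mul_mul_eq_smul_of_add_eq_smul_one (halt_left : ∀ x y, μ (μ x x) y = μ x (μ x y))
    {a b : A} {t N : ℂ} (hab : a + b = t • one) (hN : μ a b = N • one) (x : A) :
    μ a (μ b x) = N • x := by
  rw [mul_mul_of_add_eq_smul_one μ hone_mul hmul_one halt_left hab, hN, map_smul,
    LinearMap.smul_apply, hone_mul]

end UnitalBilinear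

theorem act_adjugate_act {μ : A →ₗ[ℂ] A →ₗ[ℂ] A} {one a b : A} {N : ℂ}
    (hone_mul : ∀ x, μ one x = x) (hab : ∀ x, μ a (μ b x) = N • x)
    (hba : ∀ x, μ b (μ a x) = N • x) (α β : ℂ) (Q : Fin 2 → A) :
    act (μ · ·) ![![(-β) • one, a], ![b, (-α) • one]] (act (μ · ·) ![![α • one, a], ![b, β • one]] Q)
      = (-(α * β - N)) • Q := by
  ext k
  fin_cases k <;>
    simp only [act, Fin.zero_eta, Fin.mk_one, Fin.isValue, Matrix.cons_val', Matrix.cons_val_zero,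
      Matrix.cons_val_one, Matrix.cons_val_fin_one, map_add, map_smul,
      LinearMap.smul_apply, hone_mul, hab, hba, Pi.smul_apply] <;> module

theorem clifford_relation_general
    (mul : A → A → A) (one : A) (σ : A → A) (Re Nm : A → ℂ)
    -- `mul` is ℂ-bilinear
    (hmul_addl : ∀ x y z : A, mul (x + y) z = mul x z + mul y z)
    (hmul_addr : ∀ x y z : A, mul x (y + z) = mul x y + mul x z)
    (hmul_smull : ∀ (c : ℂ) (x y : A), mul (c • x) y = c • mul x y)
    (hmul_smulr : ∀ (c : ℂ) (x y : A), mul x (c • y) = c • mul x y)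
    -- `one` is a unit
    (hone_mul : ∀ x : A, mul one x = x)
    (hmul_one : ∀ x : A, mul x one = x)
    -- `A` is alternative: the associator is alternating
    (halt_left : ∀ x y : A, mul (mul x x) y = mul x (mul x y))
    -- real part and norm scalars
    (hRe : ∀ x : A, x + σ x = (2 * Re x) • one)
    (hNm : ∀ x : A, mul x (σ x) = Nm x • one)
    (α β : ℂ) (a : A) (Q : Fin 2 → A) :
    (∀ k, act mul (tilde ![![α • one, a], ![σ a, β • one]])
        (act mul ![![α • one, a], ![σ a, β • one]] Q) k = (-(α * β - Nm a)) • Q k)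
    ∧ (∀ k, act mul ![![α • one, a], ![σ a, β • one]]
        (act mul (tilde ![![α • one, a], ![σ a, β • one]]) Q) k = (-(α * β - Nm a)) • Q k) := by
  set μ := LinearMap.mk₂ ℂ mul hmul_addl hmul_smull hmul_addr hmul_smulr
  have hmul : mul = (μ · ·) := rfl
  have hRe' : σ a + a = (2 * Re a) • one := (add_comm _ _).trans (hRe a)
  have hNm' : μ (σ a) a = Nm a • one :=
    (mul_comm_of_add_eq_smul_one μ hone_mul hmul_one (hRe a)).symm.trans (hNm a)
  have ha_σa := mul_mul_eq_smul_of_add_eq_smul_one μ hone_mul hmul_one halt_left (hRe a) (hNm a)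
  have hσa_a := mul_mul_eq_smul_of_add_eq_smul_one μ hone_mul hmul_one halt_left hRe' hNm'
  rw [tilde_eq_adjugate, hmul]
  refine ⟨congrFun (act_adjugate_act hone_mul ha_σa hσa_a α β Q), fun k => ?_⟩
  simpa [neg_neg, mul_comm] using congrFun (act_adjugate_act hone_mul ha_σa hσa_a (-β) (-α) Q) k

theorem clifford_relation
    (mul : A → A → A) (one : A) (σ : A → A) (Re Nm : A → ℂ)
    -- `mul` is ℂ-bilinear
    (hmul_addl : ∀ x y z : A, mul (x + y) z = mul x z + mul y z)
    (hmul_addr : ∀ x y z : A, mul x (y + z) = mul x y + mul x z)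
    (hmul_smull : ∀ (c : ℂ) (x y : A), mul (c • x) y = c • mul x y)
    (hmul_smulr : ∀ (c : ℂ) (x y : A), mul x (c • y) = c • mul x y)
    -- `one` is a unit
    (hone_mul : ∀ x : A, mul one x = x)
    (hmul_one : ∀ x : A, mul x one = x)
    -- `A` is alternative: the associator is alternating
    (halt_left : ∀ x y : A, mul (mul x x) y = mul x (mul x y))
    (halt_right : ∀ x y : A, mul (mul x y) y = mul x (mul y y))
    (halt_flex : ∀ x y : A, mul (mul x y) x = mul x (mul y x))
    -- `σ` is a ℂ-linear anti-involution
    (hσ_add : ∀ x y : A, σ (x + y) = σ x + σ y)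
    (hσ_smul : ∀ (c : ℂ) (x : A), σ (c • x) = c • σ x)
    (hσ_mul : ∀ x y : A, σ (mul x y) = mul (σ y) (σ x))
    (hσ_invol : ∀ x : A, σ (σ x) = x)
    (hσ_one : σ one = one)
    -- real part and norm scalars
    (hRe : ∀ x : A, x + σ x = (2 * Re x) • one)
    (hNm : ∀ x : A, mul x (σ x) = Nm x • one)
    -- nondegeneracy of the form `(x,y) ↦ Re(x·σ(y))`
    (hnondeg : ∀ x : A, (∀ y : A, Re (mul x (σ y)) = 0) → x = 0)
    (α β : ℂ) (a : A) (Q : Fin 2 → A) :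
    (∀ k, act mul (tilde ![![α • one, a], ![σ a, β • one]])
        (act mul ![![α • one, a], ![σ a, β • one]] Q) k = (-(α * β - Nm a)) • Q k)
    ∧ (∀ k, act mul ![![α • one, a], ![σ a, β • one]]
        (act mul (tilde ![![α • one, a], ![σ a, β • one]]) Q) k = (-(α * β - Nm a)) • Q k) :=
  clifford_relation_general mul one σ Re Nm hmul_addl hmul_addr hmul_smull hmul_smulr hone_mul
    hmul_one halt_left hRe hNm α β a Q

end Stmt4
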